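/- Let n = 2k, s with gcd(s,2k)=1, and b a non-cube in F_{2^{2k}}. With u = (b^{2^{-s}}+1)/(b+b^{2^{-s}}) and v = (b^{2^{-s}+1}+b)/(b+b^{2^{-s}}), the equation b(x+u)^{2^s+1} = (x+v)^{2^s+1} has no solution x in F_{2^{2k}}: indeed any solution would require x + u = x + v = 0, forcing b = 1, a contradiction. -/

import Mathlib

/-! If `x + u ≠ 0`, the equation exhibits `b` as a `(2^s+1)`-th power, hence as a cube, since
`s` is odd and so `3 ∣ 2^s + 1`. If `x + u = 0`, then also `x + v = 0`, so `u = v`, which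
amounts to `(b' + 1)(b - 1) = 0` and forces `b = 1`. The denominator `b + b'` does not vanish:
otherwise `b` would be fixed by the `s`-th and the `2k`-th power of Frobenius, hence by
Frobenius itself, so `b ∈ {0, 1}`. -/

theorem pow_pow_gcd_eq_self {M : Type*} [Monoid M] {p m n : ℕ} {b : M}
    (hm : b ^ p ^ m = b) (hn : b ^ p ^ n = b) : b ^ p ^ Nat.gcd m n = b := by
  have key : ∀ j, Function.IsPeriodicPt (· ^ p) j b ↔ b ^ p ^ j = b := fun j => by
    rw [Function.IsPeriodicPt, Function.IsFixedPt, pow_iterate]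
  exact (key _).1 (((key m).2 hm).gcd ((key n).2 hn))

theorem FiniteField.eq_zero_or_one_of_pow_two_pow_eq_self {F : Type*} [Field F] [Fintype F]
    {n s : ℕ} (hcard : Fintype.card F = 2 ^ n) (hgcd : Nat.gcd s n = 1) {b : F}
    (hb : b ^ 2 ^ s = b) : b = 0 ∨ b = 1 := by
  have hcard_pow : b ^ 2 ^ n = b := hcard ▸ FiniteField.pow_card b
  have hsq : b * b = b := by simpa [hgcd, sq] using pow_pow_gcd_eq_self hb hcard_pow
  exact IsIdempotentElem.iff_eq_zero_or_one.mp hsq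

theorem exists_cube_of_pow_two_pow_add_one {M : Type*} [Monoid M] {s : ℕ} (hs : Odd s)
    {b c : M} (h : c ^ (2 ^ s + 1) = b) : ∃ d : M, d ^ 3 = b := by
  obtain ⟨t, ht⟩ : 3 ∣ 2 ^ s + 1 := by simpa using hs.nat_add_dvd_pow_add_pow 2 1
  exact ⟨c ^ t, by rw [← pow_mul, mul_comm, ← ht, h]⟩

theorem eq_one_of_add_one_eq_mul_add {R : Type*} [CommRing R] [NoZeroDivisors R] {s : ℕ}
    (hs : 0 < s) {b b' : R} (hb' : b' ^ 2 ^ s = b) (h : b' + 1 = b' * b + b) : b = 1 := by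
  have hfac : (b' + 1) * (b - 1) = 0 := by linear_combination -h
  rcases mul_eq_zero.mp hfac with h' | h'
  · rw [← hb', eq_neg_of_add_eq_zero_left h', (Nat.even_pow.mpr ⟨even_two, hs.ne'⟩).neg_pow,
      one_pow]
  · exact sub_eq_zero.mp h'

theorem stmt18_general (F : Type*) [Field F] [Fintype F] (k s : ℕ)
    (hcard : Fintype.card F = 2 ^ (2 * k)) (hgcd : Nat.gcd s (2 * k) = 1)
    (b : F) (hb : ¬ ∃ c : F, c ^ 3 = b)
    (b' : F) (hb' : b' ^ 2 ^ s = b)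
    (u v : F) (hu : u = (b' + 1) / (b + b')) (hv : v = (b' * b + b) / (b + b')) :
    ∀ x : F, b * (x + u) ^ (2 ^ s + 1) ≠ (x + v) ^ (2 ^ s + 1) := by
  have hs : Odd s := (Nat.coprime_mul_iff_right.mp hgcd).1.odd_of_right
  have hb01 : b ≠ 0 ∧ b ≠ 1 := ⟨fun h => hb ⟨0, by simp [h]⟩, fun h => hb ⟨1, by simp [h]⟩⟩
  have hden : b + b' ≠ 0 := fun h => by
    have hfix : b ^ 2 ^ s = b :=
      calc b ^ 2 ^ s = (-b') ^ 2 ^ s := by rw [eq_neg_of_add_eq_zero_left h]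
        _ = b := by rw [(Nat.even_pow.mpr ⟨even_two, hs.pos.ne'⟩).neg_pow, hb']
    exact (FiniteField.eq_zero_or_one_of_pow_two_pow_eq_self hcard hgcd hfix).elim hb01.1 hb01.2
  intro x h
  by_cases hxu : x + u = 0
  · have hxv : x + v = 0 := pow_eq_zero_iff (Nat.succ_ne_zero _) |>.mp <| by
      rw [← h, hxu, zero_pow (Nat.succ_ne_zero _), mul_zero]
    have huv : u = v := by linear_combination hxu - hxv
    rw [hu, hv, div_left_inj' hden] at huv
    exact hb01.2 (eq_one_of_add_one_eq_mul_add hs.pos hb' huv)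
  · refine hb (exists_cube_of_pow_two_pow_add_one hs (c := (x + v) / (x + u)) ?_)
    rw [div_pow, div_eq_iff (pow_ne_zero _ hxu), h]

/-- For a non-cube `b` in `F_{2^{2k}}` with `gcd(s,2k)=1`, with
`b'` the inverse Frobenius image of `b` (`b'^{2^s} = b`),
`u = (b'+1)/(b+b')` and `v = (b'·b+b)/(b+b')` (note `b^{2^{-s}+1} = b'·b`),
the equation `b(x+u)^{2^s+1} = (x+v)^{2^s+1}` has no solution `x`. -/
theorem stmt18 (F : Type*) [Field F] [Fintype F] (k s : ℕ) (hk : 0 < k) (hs : 0 < s)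
    (hcard : Fintype.card F = 2 ^ (2 * k)) (hgcd : Nat.gcd s (2 * k) = 1)
    (b : F) (hb : ¬ ∃ c : F, c ^ 3 = b)
    (b' : F) (hb' : b' ^ 2 ^ s = b)
    (u v : F) (hu : u = (b' + 1) / (b + b')) (hv : v = (b' * b + b) / (b + b')) :
    ∀ x : F, b * (x + u) ^ (2 ^ s + 1) ≠ (x + v) ^ (2 ^ s + 1) :=
  stmt18_general F k s hcard hgcd b hb b' hb' u v hu hv
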